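/- Every independent set of 7 vertices in the 4-cube (i.e., every set of 7 pairwise non-adjacent vertices) is contained in a single parity class: all 7 vertices have coordinate sums of the same parity. -/

import Mathlib

/-!
The parity classes of the 4-cube have 8 vertices each and every edge joins the two classes.
A vertex has 4 neighbours and two distinct vertices have at most 2 common neighbours, so a
nonempty set `X` inside one class has at least 4 neighbours, and at least 6 once `#X ≥ 2`.
If an independent set met both classes, in `X` and `Y`, then `Y` would avoid the neighbours
of `X` inside the other class, so `#Y + #N(X) ≤ 8`, and symmetrically `#X + #N(Y) ≤ 8`;
these force `#X + #Y ≤ 5`.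
-/

/-- Flip coordinate `i` of a binary `n`-tuple. -/
def flipBit {n : ℕ} (v : Fin n → ZMod 2) (i : Fin n) : Fin n → ZMod 2 :=
  Function.update v i (v i + 1)

open Finset

variable {n : ℕ}

theorem ZMod.eq_add_one_of_ne {x y : ZMod 2} (h : x ≠ y) : x = y + 1 := by
  revert x y
  decide

lemma flipBit_apply_self (v : Fin n → ZMod 2) (i : Fin n) : flipBit v i i = v i + 1 := by
  simp [flipBit]

lemma flipBit_apply_of_ne (v : Fin n → ZMod 2) {i j : Fin n} (h : j ≠ i) :
    flipBit v i j = v j := by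
  simp [flipBit, h]

lemma flipBit_ne_self (v : Fin n → ZMod 2) (i : Fin n) : flipBit v i ≠ v := fun h => by
  simpa [flipBit_apply_self] using congrFun h i

lemma flipBit_injective (v : Fin n → ZMod 2) : Function.Injective (flipBit v) := by
  intro i j h
  by_contra hij
  simpa [flipBit_apply_self, flipBit_apply_of_ne v hij] using congrFun h i

lemma eq_of_flipBit_eq_of_apply_eq {u v : Fin n → ZMod 2} {k l : Fin n}
    (h : flipBit u k = flipBit v l) (hk : u k = v k) : u = v := by
  have := congrFun h
  have hkl : k = l := by
    by_contra hkl
    simpa [flipBit_apply_self, flipBit_apply_of_ne v hkl, hk] using this k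
  subst hkl
  ext m
  rcases eq_or_ne m k with rfl | hm
  · exact hk
  · simpa [flipBit_apply_of_ne _ hm] using this m

lemma sum_flipBit (v : Fin n → ZMod 2) (i : Fin n) :
    ∑ j, flipBit v i j = ∑ j, v j + 1 := by
  rw [flipBit, sum_update_of_mem (mem_univ i),
    sum_eq_add_sum_sdiff_singleton_of_mem (mem_univ i) v]
  ring

lemma card_filter_sum_eq (ε : ZMod 2) :
    #{v : Fin (n + 1) → ZMod 2 | ∑ i, v i = ε} = 2 ^ n := by
  calc _ = #(univ : Finset (Fin n → ZMod 2)) := by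
        refine card_nbij' Fin.tail (fun w => Fin.cons (ε - ∑ i, w i) w) (by simp) ?_ ?_ ?_
        · intro w _
          simp [Fin.sum_cons]
        · intro v hv
          simp only [coe_filter, mem_univ, true_and, Set.mem_ofPred_eq, Fin.sum_univ_succ] at hv
          simp [← hv, Fin.tail, Fin.cons_self_tail]
        · intro w _
          simp
    _ = 2 ^ n := by simp

def cubeNbhd (v : Fin n → ZMod 2) : Finset (Fin n → ZMod 2) := univ.image (flipBit v)

lemma card_cubeNbhd (v : Fin n → ZMod 2) : #(cubeNbhd v) = n := by
  simp [cubeNbhd, card_image_of_injective _ (flipBit_injective v)]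

lemma card_cubeNbhd_inter_le_two {u v : Fin n → ZMod 2} (huv : u ≠ v) :
    #(cubeNbhd u ∩ cubeNbhd v) ≤ 2 := by
  obtain h | ⟨w, hw⟩ := (cubeNbhd u ∩ cubeNbhd v).eq_empty_or_nonempty
  · simp [h]
  simp only [cubeNbhd, mem_inter, mem_image, mem_univ, true_and] at hw
  obtain ⟨⟨i, rfl⟩, j, hij⟩ := hw
  -- `u` and `v` differ only at `i` and `j`, and a common neighbour flips `u` where they differ
  have hsub : cubeNbhd u ∩ cubeNbhd v ⊆ ({i, j} : Finset (Fin n)).image (flipBit u) := by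
    simp only [subset_iff, cubeNbhd, mem_inter, mem_image, mem_univ, true_and]
    rintro _ ⟨⟨k, rfl⟩, l, hkl⟩
    refine ⟨k, ?_, rfl⟩
    by_contra hk
    simp only [mem_insert, mem_singleton, not_or] at hk
    have := congrFun hij k
    rw [flipBit_apply_of_ne _ hk.1, flipBit_apply_of_ne _ hk.2] at this
    exact huv (eq_of_flipBit_eq_of_apply_eq hkl.symm this.symm)
  calc _ ≤ _ := card_le_card hsub
    _ ≤ #({i, j} : Finset (Fin n)) := card_image_le
    _ ≤ 2 := card_le_two

lemma le_card_biUnion_cubeNbhd {X : Finset (Fin n → ZMod 2)} (hX : X.Nonempty) :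
    n ≤ #(X.biUnion cubeNbhd) := by
  obtain ⟨x, hx⟩ := hX
  simpa [card_cubeNbhd] using card_le_card (subset_biUnion_of_mem cubeNbhd hx)

lemma two_mul_le_card_biUnion_cubeNbhd {X : Finset (Fin n → ZMod 2)} (hX : 1 < #X) :
    2 * n ≤ #(X.biUnion cubeNbhd) + 2 := by
  obtain ⟨x, hx, y, hy, hxy⟩ := one_lt_card.1 hX
  have hunion := card_union_add_card_inter (cubeNbhd x) (cubeNbhd y)
  have hsub : cubeNbhd x ∪ cubeNbhd y ⊆ X.biUnion cubeNbhd :=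
    union_subset (subset_biUnion_of_mem _ hx) (subset_biUnion_of_mem _ hy)
  have := card_le_card hsub
  have := card_cubeNbhd_inter_le_two hxy
  rw [card_cubeNbhd, card_cubeNbhd] at hunion
  omega

lemma card_add_card_biUnion_cubeNbhd_le {X Y : Finset (Fin (n + 1) → ZMod 2)} {ε : ZMod 2}
    (hX : ∀ x ∈ X, ∑ i, x i = ε) (hY : ∀ y ∈ Y, ∑ i, y i ≠ ε)
    (hXY : Disjoint (X.biUnion cubeNbhd) Y) : #Y + #(X.biUnion cubeNbhd) ≤ 2 ^ n := by
  rw [← card_union_of_disjoint hXY.symm, ← card_filter_sum_eq (ε + 1)]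
  refine card_le_card (union_subset ?_ ?_) <;> intro v hv <;> rw [mem_filter]
  · exact ⟨mem_univ v, ZMod.eq_add_one_of_ne (hY v hv)⟩
  · simp only [mem_biUnion, cubeNbhd, mem_image, mem_univ, true_and] at hv
    obtain ⟨x, hx, i, rfl⟩ := hv
    exact ⟨mem_univ _, by rw [sum_flipBit, hX x hx]⟩

lemma disjoint_biUnion_cubeNbhd {S : Finset (Fin n → ZMod 2)}
    (hS : ∀ v ∈ S, ∀ w ∈ S, v ≠ w → ¬ ∃ i, w = flipBit v i) :
    Disjoint (S.biUnion cubeNbhd) S := by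
  simp only [disjoint_left, mem_biUnion, cubeNbhd, mem_image, mem_univ, true_and]
  rintro _ ⟨v, hv, i, rfl⟩ hw
  exact hS v hv _ hw (flipBit_ne_self v i).symm ⟨i, rfl⟩

theorem independent_7_set_in_4cube_one_parity (S : Finset (Fin 4 → ZMod 2))
    (hcard : S.card = 7)
    (hind : ∀ v ∈ S, ∀ w ∈ S, v ≠ w → ¬ ∃ i, w = flipBit v i) :
    ∃ ε : ZMod 2, ∀ v ∈ S, ∑ i, v i = ε := by
  by_contra! h
  obtain ⟨a, ha⟩ : S.Nonempty := card_pos.1 (by omega)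
  set X := {v ∈ S | ∑ i, v i = ∑ i, a i}
  set Y := {v ∈ S | ∑ i, v i ≠ ∑ i, a i}
  have hXne : X.Nonempty := ⟨a, mem_filter.2 ⟨ha, rfl⟩⟩
  have hYne : Y.Nonempty := by
    obtain ⟨b, hb, hba⟩ := h (∑ i, a i)
    exact ⟨b, mem_filter.2 ⟨hb, hba⟩⟩
  have hXY : #X + #Y = 7 := hcard ▸ card_filter_add_card_filter_not _
  have hdisj {A B : Finset (Fin 4 → ZMod 2)} (hA : A ⊆ S) (hB : B ⊆ S) :
      Disjoint (A.biUnion cubeNbhd) B :=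
    (disjoint_biUnion_cubeNbhd hind).mono (biUnion_subset_biUnion_of_subset_left _ hA) hB
  have hX := card_add_card_biUnion_cubeNbhd_le (X := X) (Y := Y)
    (fun x hx => (mem_filter.1 hx).2) (fun y hy => (mem_filter.1 hy).2)
    (hdisj (filter_subset _ S) (filter_subset _ S))
  have hY := card_add_card_biUnion_cubeNbhd_le (X := Y) (Y := X) (ε := ∑ i, a i + 1)
    (fun y hy => ZMod.eq_add_one_of_ne (mem_filter.1 hy).2)
    (fun x hx => by simp [(mem_filter.1 hx).2])
    (hdisj (filter_subset _ S) (filter_subset _ S))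
  have hNX := le_card_biUnion_cubeNbhd hXne
  have hNY := le_card_biUnion_cubeNbhd hYne
  have hNX₂ : 1 < #X → _ := two_mul_le_card_biUnion_cubeNbhd
  have hNY₂ : 1 < #Y → _ := two_mul_le_card_biUnion_cubeNbhd
  omega
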